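/- Let U be a standard normal real random variable, k ≥ 1 an integer and Z ∈ ℝ^k. Then ‖ N(0, I_k) − N(Z, I_k) ‖_TV = P( |U| ≤ ‖Z‖/2 ) ≤ ‖Z‖/√(2π). -/

import Mathlib

open MeasureTheory ProbabilityTheory Matrix Filter Real Asymptotics Topology

noncomputable section

/-- Standard Gaussian measure on `Fin d → ℝ`. -/
def stdGaussian (d : ℕ) : Measure (Fin d → ℝ) :=
  Measure.pi fun _ => gaussianReal 0 1

open Classical in
/-- Gaussian measure on `Fin d → ℝ` with mean `m` and positive semidefinite covariance `S`
(by convention the zero measure if `S` is not positive semidefinite). -/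
def gaussianVec {d : ℕ} (m : Fin d → ℝ) (S : Matrix (Fin d) (Fin d) ℝ) :
    Measure (Fin d → ℝ) :=
  if h : S.PosSemidef then (stdGaussian d).map (fun x => m + ((h.1.eigenvectorUnitary : Matrix (Fin d) (Fin d) ℝ) *
      diagonal ((√·) ∘ h.1.eigenvalues) *
      (star h.1.eigenvectorUnitary : Matrix (Fin d) (Fin d) ℝ)).mulVec x) else 0

/-- Total variation distance between two measures. -/
def tvDist {E : Type*} [MeasurableSpace E] (μ ν : Measure E) : ℝ :=
  ⨆ s : Set E, |(μ s).toReal - (ν s).toReal|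

/-- Euclidean norm of a vector. -/
def vecNorm {d : ℕ} (x : Fin d → ℝ) : ℝ := Real.sqrt (∑ i, x i ^ 2)

/-- Posterior measure built from a prior and a (possibly unnormalized) likelihood. -/
def posteriorMeas {T : Type*} [MeasurableSpace T] (μ : Measure T) (L : T → ENNReal) :
    Measure T :=
  ((μ.withDensity L) Set.univ)⁻¹ • μ.withDensity L

/-- Gaussian regression likelihood of `θ` given observation `y` (up to normalization):
the density of `N(Φθ, σ²Iₙ)` at `y`, up to a constant factor. -/
def regLik {n k : ℕ} (Φ : Matrix (Fin n) (Fin k) ℝ) (σ : ℝ) (y : Fin n → ℝ)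
    (θ : Fin k → ℝ) : ENNReal :=
  ENNReal.ofReal (Real.exp (-(∑ i, (y i - Φ.mulVec θ i) ^ 2) / (2 * σ ^ 2)))

/-- Least squares / maximum likelihood estimator `θ_Y = (ΦᵀΦ)⁻¹ΦᵀY`. -/
def thetaLS {n k : ℕ} (Φ : Matrix (Fin n) (Fin k) ℝ) (y : Fin n → ℝ) : Fin k → ℝ :=
  ((Φᵀ * Φ)⁻¹ * Φᵀ).mulVec y

/-- Orthogonal projection matrix `P = Φ(ΦᵀΦ)⁻¹Φᵀ` onto the column span of `Φ`. -/
def projMat {n k : ℕ} (Φ : Matrix (Fin n) (Fin k) ℝ) : Matrix (Fin n) (Fin n) ℝ :=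
  Φ * (Φᵀ * Φ)⁻¹ * Φᵀ

/-- A measure conditioned to a set. -/
def condMeas {T : Type*} [MeasurableSpace T] (μ : Measure T) (E : Set T) : Measure T :=
  (μ E)⁻¹ • μ.restrict E

/-- The ellipsoid `𝓔_{θ₀,Φ}(M) = {θ : (θ−θ₀)ᵀΦᵀΦ(θ−θ₀) ≤ σ²M}`. -/
def ellipsoid {n k : ℕ} (Φ : Matrix (Fin n) (Fin k) ℝ) (θ₀ : Fin k → ℝ) (σ M : ℝ) :
    Set (Fin k → ℝ) :=
  {θ | dotProduct (θ - θ₀) ((Φᵀ * Φ).mulVec (θ - θ₀)) ≤ σ ^ 2 * M}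

/-- `ψ(s) = P(Z ∈ s)` for a standard normal `Z`. -/
def gaussProb (s : Set ℝ) : ℝ := ((gaussianReal 0 1) s).toReal

/-!
Translating `N(0, I)` by `Z` multiplies its density by the likelihood ratio
`ρ x = exp (⟪Z, x⟫ - ‖Z‖² / 2)` (Cameron–Martin), so the supremum defining the total variation
is attained on `H = {ρ ≤ 1} = {⟪Z, x⟫ ≤ ‖Z‖² / 2}` (Scheffé). Under `N(0, I)` the projection
`⟪Z, x⟫` is `N(0, ‖Z‖²)`, and translating by `Z` shifts it by `‖Z‖²`; hence
`N(0, I)(H) - N(Z, I)(H) = P(-‖Z‖/2 < U ≤ ‖Z‖/2)`. The bound follows from the standard normal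
density being at most `1/√(2π)`.
-/

open Set
open scoped ENNReal NNReal

namespace MeasureTheory

variable {ι : Type*} [Fintype ι] {α : ι → Type*} [∀ i, MeasurableSpace (α i)]
  {μ : ∀ i, Measure (α i)} [∀ i, IsProbabilityMeasure (μ i)] {f : ∀ i, α i → ℝ≥0∞}

theorem lintegral_fintype_prod_eq_prod (hf : ∀ i, Measurable (f i)) :
    ∫⁻ x, ∏ i, f i (x i) ∂Measure.pi μ = ∏ i, ∫⁻ y, f i y ∂μ i := by
  rw [lintegral_prod_eq_prod_lintegral_of_indepFun _ _
    (iIndepFun_pi fun i => (hf i).aemeasurable) fun i => (hf i).comp (measurable_pi_apply i)]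
  exact Finset.prod_congr rfl fun i _ => (measurePreserving_eval μ i).lintegral_comp (hf i)

theorem Measure.pi_withDensity [∀ i, SigmaFinite ((μ i).withDensity (f i))]
    (hf : ∀ i, Measurable (f i)) :
    Measure.pi (fun i => (μ i).withDensity (f i)) =
      (Measure.pi μ).withDensity fun x => ∏ i, f i (x i) := by
  refine Measure.pi_eq fun s hs => ?_
  have hind : (univ.pi s).indicator (fun x => ∏ i, f i (x i)) =
      fun x => ∏ i, (s i).indicator (f i) (x i) := by
    ext x
    simp only [indicator, mem_univ_pi]
    split_ifs with h
    · exact Finset.prod_congr rfl fun i _ => by simp [h i]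
    · obtain ⟨i, hi⟩ : ∃ i, x i ∉ s i := by simpa using h
      exact (Finset.prod_eq_zero (Finset.mem_univ i) (by simp [hi])).symm
  rw [withDensity_apply _ (MeasurableSet.univ_pi hs),
    ← lintegral_indicator (MeasurableSet.univ_pi hs), hind,
    lintegral_fintype_prod_eq_prod fun i => (hf i).indicator (hs i)]
  exact Finset.prod_congr rfl fun i _ => by
    rw [lintegral_indicator (hs i), withDensity_apply _ (hs i)]

end MeasureTheory

section TotalVariation

variable {α : Type*} [MeasurableSpace α] {μ ν : Measure α} {ρ : α → ℝ≥0∞}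

lemma measureReal_sub_le_of_eq_withDensity [IsFiniteMeasure μ] [IsFiniteMeasure ν]
    (hρ : Measurable ρ) (hν : ν = μ.withDensity ρ) {t : Set α} (ht : MeasurableSet t) :
    μ.real t - ν.real t ≤ μ.real {x | ρ x ≤ 1} - ν.real {x | ρ x ≤ 1} := by
  set H := {x | ρ x ≤ 1}
  have hH : MeasurableSet H := measurableSet_le hρ measurable_const
  have hout : μ.real (t \ H) ≤ ν.real (t \ H) := by
    refine ENNReal.toReal_mono (measure_ne_top _ _) ?_
    rw [hν, withDensity_apply _ (ht.diff hH)]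
    exact (setLIntegral_one _).symm.trans_le
      (setLIntegral_mono hρ fun x hx => (not_le.mp hx.2).le)
  have hin : ν.real (H \ t) ≤ μ.real (H \ t) := by
    refine ENNReal.toReal_mono (measure_ne_top _ _) ?_
    rw [hν, withDensity_apply _ (hH.diff ht)]
    exact (setLIntegral_mono measurable_const fun x hx => hx.1).trans_eq (setLIntegral_one _)
  rw [← measureReal_inter_add_sdiff (s := t) hH, ← measureReal_inter_add_sdiff (s := t) hH (μ := ν),
    ← measureReal_inter_add_sdiff (s := H) ht, ← measureReal_inter_add_sdiff (s := H) ht (μ := ν),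
    inter_comm H t]
  linarith

variable [IsProbabilityMeasure μ] [IsProbabilityMeasure ν]

lemma abs_measureReal_sub_le_of_eq_withDensity (hρ : Measurable ρ) (hν : ν = μ.withDensity ρ)
    (s : Set α) :
    |μ.real s - ν.real s| ≤ μ.real {x | ρ x ≤ 1} - ν.real {x | ρ x ≤ 1} := by
  have real_toMeasurable (m : Measure α) : m.real (toMeasurable m s) = m.real s := by
    rw [Measure.real, Measure.real, measure_toMeasurable]
  rw [abs_sub_le_iff]
  constructor
  · have ht := measureReal_sub_le_of_eq_withDensity hρ hν (measurableSet_toMeasurable ν s)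
    have hle : μ.real s ≤ μ.real (toMeasurable ν s) := measureReal_mono (subset_toMeasurable ν s)
    linarith [real_toMeasurable ν]
  · have ht := measurableSet_toMeasurable μ s
    have htc := measureReal_sub_le_of_eq_withDensity hρ hν ht.compl
    have hle : ν.real s ≤ ν.real (toMeasurable μ s) := measureReal_mono (subset_toMeasurable μ s)
    rw [measureReal_compl ht, measureReal_compl ht, probReal_univ, probReal_univ] at htc
    linarith [real_toMeasurable μ]

theorem tvDist_eq_of_eq_withDensity (hρ : Measurable ρ) (hν : ν = μ.withDensity ρ) :
    tvDist μ ν = μ.real {x | ρ x ≤ 1} - ν.real {x | ρ x ≤ 1} := by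
  have hbound := abs_measureReal_sub_le_of_eq_withDensity hρ hν
  refine le_antisymm (ciSup_le hbound) ?_
  exact le_ciSup_of_le ⟨_, forall_mem_range.mpr hbound⟩ {x | ρ x ≤ 1} (le_abs_self _)

end TotalVariation

lemma gaussianReal_eq_withDensity (m : ℝ) :
    gaussianReal m 1 =
      (gaussianReal 0 1).withDensity fun t => ENNReal.ofReal (exp (m * t - m ^ 2 / 2)) := by
  rw [gaussianReal_of_var_ne_zero _ one_ne_zero, gaussianReal_of_var_ne_zero _ one_ne_zero,
    ← withDensity_mul _ (measurable_gaussianPDF _ _) (by fun_prop)]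
  congr 1
  ext t
  simp only [gaussianPDF, gaussianPDFReal, Pi.mul_apply]
  rw [← ENNReal.ofReal_mul (by positivity), mul_assoc _ (rexp _), ← Real.exp_add]
  congr 3
  push_cast
  ring

lemma gaussianReal_real_Icc_le {a b : ℝ} (hab : a ≤ b) :
    (gaussianReal 0 1).real (Icc a b) ≤ (b - a) / √(2 * π) := by
  have hpdf (t : ℝ) : gaussianPDF 0 1 t ≤ ENNReal.ofReal ((√(2 * π))⁻¹) := by
    rw [gaussianPDF, gaussianPDFReal, NNReal.coe_one, mul_one]
    refine ENNReal.ofReal_le_ofReal (mul_le_of_le_one_right ?_ ?_)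
    · positivity
    · exact Real.exp_le_one_iff.mpr (by nlinarith [sq_nonneg t])
  have hle : gaussianReal 0 1 (Icc a b) ≤ ENNReal.ofReal ((√(2 * π))⁻¹ * (b - a)) := by
    rw [gaussianReal_apply _ one_ne_zero, ENNReal.ofReal_mul (by positivity), ← Real.volume_Icc,
      ← setLIntegral_const]
    exact setLIntegral_mono measurable_const fun t _ => hpdf t
  calc (gaussianReal 0 1).real (Icc a b) ≤ (√(2 * π))⁻¹ * (b - a) :=
        ENNReal.toReal_le_of_le_ofReal (by have := sub_nonneg.mpr hab; positivity) hle
    _ = (b - a) / √(2 * π) := by ring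

lemma gaussianReal_real_Iic_sub_real_Iic {v : ℝ} (hv : 0 ≤ v) :
    (gaussianReal 0 v.toNNReal).real (Iic (v / 2)) -
        (gaussianReal 0 v.toNNReal).real (Iic (-(v / 2))) =
      (gaussianReal 0 1).real (Icc (-(√v / 2)) (√v / 2)) := by
  have hscale : gaussianReal 0 v.toNNReal = (gaussianReal 0 1).map (√v * ·) := by
    rw [gaussianReal_map_const_mul, mul_zero, mul_one]
    congr
    ext
    simp [Real.sq_sqrt hv, hv]
  have hpre : (√v * ·) ⁻¹' Ioc (-(v / 2)) (v / 2) = Ioc (-(√v / 2)) (√v / 2) := by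
    rcases (Real.sqrt_nonneg v).eq_or_lt with h0 | hpos
    · obtain rfl : v = 0 := (Real.sqrt_eq_zero hv).mp h0.symm
      simp
    · ext u
      have hsq := Real.sq_sqrt hv
      simp only [mem_preimage, mem_Ioc]
      constructor <;> rintro ⟨h1, h2⟩ <;> constructor <;> nlinarith
  have hIoc : Iic (v / 2) \ Iic (-(v / 2)) = Ioc (-(v / 2)) (v / 2) := by ext; simp [and_comm]
  have := nullSingletonClass_gaussianReal (μ := 0) one_ne_zero
  rw [← measureReal_sdiff (Iic_subset_Iic.mpr (by linarith)) measurableSet_Iic, hIoc,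
    hscale, map_measureReal_apply (by fun_prop) measurableSet_Ioc, hpre,
    measureReal_congr Ioc_ae_eq_Icc]

section StandardGaussianProduct

variable {ι : Type*} [Fintype ι] (z : ι → ℝ)

theorem pi_gaussianReal_map_const_add :
    (Measure.pi fun _ : ι => gaussianReal 0 1).map (z + ·) =
      (Measure.pi fun _ : ι => gaussianReal 0 1).withDensity
        fun x => ENNReal.ofReal (exp (z ⬝ᵥ x - z ⬝ᵥ z / 2)) := by
  have hmap := Measure.pi_map_pi (μ := fun _ : ι => gaussianReal 0 1)
    (f := fun i t => z i + t) fun i => (measurable_const_add (z i)).aemeasurable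
  simp only [gaussianReal_map_const_add, zero_add] at hmap
  rw [show (z + ·) = fun x i => z i + x i from rfl, hmap,
    funext fun i => gaussianReal_eq_withDensity (z i),
    Measure.pi_withDensity fun i => by fun_prop]
  congr 1
  ext x
  rw [← ENNReal.ofReal_prod_of_nonneg fun i _ => (exp_pos _).le, ← Real.exp_sum,
    Finset.sum_sub_distrib, ← Finset.sum_div]
  simp [dotProduct, sq]

theorem pi_gaussianReal_map_dotProduct :
    (Measure.pi fun _ : ι => gaussianReal 0 1).map (z ⬝ᵥ ·) =
      gaussianReal 0 (z ⬝ᵥ z).toNNReal := by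
  set L : StrongDual ℝ (EuclideanSpace ℝ ι) := innerSL ℝ (WithLp.toLp 2 z)
  have hL : (z ⬝ᵥ ·) = L ∘ WithLp.toLp 2 := by
    ext x
    simp [L, PiLp.inner_apply, dotProduct, mul_comm]
  rw [hL, ← Measure.map_map L.continuous.measurable (by fun_prop), map_pi_eq_stdGaussian,
    IsGaussian.map_eq_gaussianReal, integral_strongDual_stdGaussian, variance_dual_stdGaussian,
    innerSL_apply_norm, EuclideanSpace.real_norm_sq_eq]
  simp [dotProduct, sq]

theorem tvDist_pi_gaussianReal_map_const_add :
    tvDist (Measure.pi fun _ : ι => gaussianReal 0 1)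
        ((Measure.pi fun _ : ι => gaussianReal 0 1).map (z + ·)) =
      (gaussianReal 0 1).real (Icc (-(√(z ⬝ᵥ z) / 2)) (√(z ⬝ᵥ z) / 2)) := by
  set μ := Measure.pi fun _ : ι => gaussianReal 0 1
  have hlevel : {x | ENNReal.ofReal (exp (z ⬝ᵥ x - z ⬝ᵥ z / 2)) ≤ 1} =
      {x | z ⬝ᵥ x ≤ z ⬝ᵥ z / 2} := by
    ext x
    simp [ENNReal.ofReal_le_one]
  have hlaw (c : ℝ) :
      μ.real {x | z ⬝ᵥ x ≤ c} = (gaussianReal 0 (z ⬝ᵥ z).toNNReal).real (Iic c) := by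
    rw [← pi_gaussianReal_map_dotProduct, map_measureReal_apply (by fun_prop) measurableSet_Iic]
    rfl
  have hshift : (z + ·) ⁻¹' {x | z ⬝ᵥ x ≤ z ⬝ᵥ z / 2} = {x | z ⬝ᵥ x ≤ -(z ⬝ᵥ z / 2)} := by
    ext x
    simp only [mem_preimage, mem_ofPred_eq, dotProduct_add]
    constructor <;> intro h <;> linarith
  have : IsProbabilityMeasure (μ.map (z + ·)) := Measure.isProbabilityMeasure_map (by fun_prop)
  rw [tvDist_eq_of_eq_withDensity (by fun_prop) (pi_gaussianReal_map_const_add z), hlevel,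
    map_measureReal_apply (by fun_prop) (measurableSet_le (by fun_prop) (by fun_prop)), hshift,
    hlaw, hlaw]
  exact gaussianReal_real_Iic_sub_real_Iic (by simpa using dotProduct_self_star_nonneg z)

end StandardGaussianProduct

lemma gaussianVec_one {d : ℕ} (m : Fin d → ℝ) :
    gaussianVec m 1 = (stdGaussian d).map (m + ·) := by
  have hpsd : (1 : Matrix (Fin d) (Fin d) ℝ).PosSemidef := PosSemidef.one
  have hev (i : Fin d) : hpsd.1.eigenvalues i = 1 := by
    have : Nonempty (Fin d) := ⟨i⟩
    simpa [spectrum.one_eq] using hpsd.1.eigenvalues_mem_spectrum_real i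
  rw [gaussianVec, dif_pos hpsd]
  simp [hev, Function.comp_def]

theorem tv_gaussian_translation_general (k : ℕ) (Z : Fin k → ℝ) :
    tvDist (gaussianVec (0 : Fin k → ℝ) 1) (gaussianVec Z 1) =
      ((gaussianReal 0 1) {u : ℝ | |u| ≤ vecNorm Z / 2}).toReal ∧
    ((gaussianReal 0 1) {u : ℝ | |u| ≤ vecNorm Z / 2}).toReal ≤
      vecNorm Z / Real.sqrt (2 * π) := by
  have hnorm : vecNorm Z = √(Z ⬝ᵥ Z) := by simp [vecNorm, dotProduct, sq]
  have hball : {u : ℝ | |u| ≤ vecNorm Z / 2} = Icc (-(vecNorm Z / 2)) (vecNorm Z / 2) := by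
    ext u
    simp [abs_le]
  simp only [← measureReal_def, hball]
  refine ⟨?_, ?_⟩
  · rw [gaussianVec_one, gaussianVec_one, _root_.stdGaussian]
    simp only [zero_add, Measure.map_id']
    rw [tvDist_pi_gaussianReal_map_const_add, hnorm]
  · have : 0 ≤ vecNorm Z := Real.sqrt_nonneg _
    exact (gaussianReal_real_Icc_le (by linarith)).trans_eq (by ring)

/-- **Total variation distance between translated standard Gaussians** (Lemma 4). -/
theorem tv_gaussian_translation (k : ℕ) (hk : 1 ≤ k) (Z : Fin k → ℝ) :
    tvDist (gaussianVec (0 : Fin k → ℝ) 1) (gaussianVec Z 1) =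
      ((gaussianReal 0 1) {u : ℝ | |u| ≤ vecNorm Z / 2}).toReal ∧
    ((gaussianReal 0 1) {u : ℝ | |u| ≤ vecNorm Z / 2}).toReal ≤
      vecNorm Z / Real.sqrt (2 * π) :=
  tv_gaussian_translation_general k Z
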